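/- The run built from the explicit Until valuation is accepting for each Until acceptance set: it is impossible that for all k beyond some index k₀, ν_k(ψ₁ U ψ₂) = A and ν_k(ψ₂) = N simultaneously. -/
import Mathlib


/-- The four observation patterns of an atomic proposition on a time interval. -/
inductive Obs where
  | A | Z | E | N
deriving DecidableEq

/-- `obsOf f a b o` : the truth pattern of the (time-indexed) property `f`
on the closed interval `[a, b]` is classified by the observation `o`. -/
def obsOf (f : ℝ → Prop) (a b : ℝ) : Obs → Prop
  | .A => ∀ t, a ≤ t → t ≤ b → f t
  | .N => ∀ t, a ≤ t → t ≤ b → ¬ f t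
  | .Z => ∃ c, a ≤ c ∧ c < b ∧ (∀ t, a ≤ t → t ≤ c → f t) ∧ (∀ t, c < t → t ≤ b → ¬ f t)
  | .E => ∃ c, a ≤ c ∧ c < b ∧ (∀ t, a ≤ t → t ≤ c → ¬ f t) ∧ (∀ t, c < t → t ≤ b → f t)

/-- Assumption 1 of the paper: (1) no double boundary crossing of any AP region
within time `τ`, and (2) at most one atomic proposition changes value across any
interval of length `τ`. -/
def Assumption1 {AP : Type} (ς : ℝ → AP → Bool) (τ : ℝ) : Prop :=
  (∀ (p : AP) (t : ℝ), 0 ≤ t → ∀ t', 0 ≤ t' → t' ≤ τ →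
      ς t p = ς (t + t') p → ∀ t'', 0 ≤ t'' → t'' ≤ t' → ς t p = ς (t + t'') p) ∧
  (∀ (p p' : AP) (t : ℝ), 0 ≤ t →
      ς t p ≠ ς (t + τ) p → ς t p' ≠ ς (t + τ) p' → p = p')

/-- The A-clause of the explicit Until valuation. -/
def clauseA (f g : ℕ → Obs) (k : ℕ) : Prop :=
  g k = .A ∨ ∃ k' > k, g k' ≠ .N ∧ ∀ k'', k ≤ k'' → k'' < k' → f k'' = .A

/-- The Z-clause of the explicit Until valuation. -/
def clauseZ (f g : ℕ → Obs) (k : ℕ) : Prop :=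
  g k = .Z ∧ ∀ k' > k, g k' ≠ .N → ∃ k'', k ≤ k'' ∧ k'' < k' ∧ f k'' ≠ .A

/-- The E-clause of the explicit Until valuation. -/
def clauseE (f g : ℕ → Obs) (k : ℕ) : Prop :=
  (g k = .E ∧ (f k = .E ∨ f k = .N)) ∨
  (g k = .N ∧ f k = .E ∧
    ∃ k' > k, g k' ≠ .N ∧ ∀ k'', k < k'' → k'' < k' → f k'' = .A)

/-- The N-clause of the explicit Until valuation. -/
def clauseN (f g : ℕ → Obs) (k : ℕ) : Prop :=
  ∀ k' ≥ k, g k' ≠ .N → ∃ k'', k ≤ k'' ∧ k'' < k' ∧ f k'' ≠ .A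

/-- `uClause f g k o` : the clause of the explicit Until valuation assigning
observation `o` to `ψ₁ U ψ₂` at step `k` holds, where `f` and `g` are the
observation sequences of `ψ₁` and `ψ₂`. -/
def uClause (f g : ℕ → Obs) (k : ℕ) : Obs → Prop
  | .A => clauseA f g k
  | .Z => clauseZ f g k
  | .E => clauseE f g k
  | .N => clauseN f g k

/-- The run built from the explicit Until valuation is accepting for the Until
acceptance set: it is impossible that from some index on, `ν_k(ψ₁ U ψ₂) = A`
and `ν_k(ψ₂) = N` simultaneously; i.e., the set
`{ν | ν(ψ₂) ≠ N or ν(ψ₁ U ψ₂) ≠ A}` is visited infinitely often. -/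
theorem until_valuation_accepting (f g u : ℕ → Obs)
    (hu : ∀ k, uClause f g k (u k)) :
    ∀ k₀ : ℕ, ∃ k > k₀, g k ≠ .N ∨ u k ≠ .A := by
  intro k₀
  by_contra h
  push_neg at h
  have hg : ∀ k > k₀, g k = .N := fun k hk => (h k hk).1
  have hua : u (k₀ + 1) = .A := (h (k₀ + 1) (by omega)).2
  have hc := hu (k₀ + 1)
  rw [hua] at hc
  rcases hc with hA | ⟨k', hk', hgk', _⟩
  · exact absurd (hg (k₀ + 1) (by omega)) (by rw [hA]; simp)
  · exact hgk' (hg k' (by omega))
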